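/- For every positive integer k and every relational structure 𝔸, all k-cores of 𝔸 are isomorphic: if 𝔸' and 𝔸'' are both k-cores of 𝔸, then 𝔸' and 𝔸'' are isomorphic. -/

import Mathlib

/-- A relational structure over a vocabulary `σ` (with arity function `ar`)
on a carrier type `V`: a (finite) universe together with a relation for each
symbol, all of whose tuples take values in the universe. -/
structure Strc (σ : Type) (ar : σ → ℕ) (V : Type) where
  univ : Set V
  rel : ∀ R : σ, Set (Fin (ar R) → V)
  mem_univ : ∀ R, ∀ t ∈ rel R, ∀ i, t i ∈ univ

/-- `f` is a homomorphism from `A` to `B`: it maps the universe into the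
universe and every tuple of every relation to a tuple of the corresponding
relation. -/
def IsHom {σ : Type} {ar : σ → ℕ} {V W : Type}
    (A : Strc σ ar V) (B : Strc σ ar W) (f : V → W) : Prop :=
  Set.MapsTo f A.univ B.univ ∧ ∀ R, ∀ t ∈ A.rel R, (fun i => f (t i)) ∈ B.rel R

/-- `A` and `B` are homomorphically equivalent. -/
def HomEquiv {σ : Type} {ar : σ → ℕ} {V W : Type}
    (A : Strc σ ar V) (B : Strc σ ar W) : Prop :=
  (∃ f, IsHom A B f) ∧ ∃ g, IsHom B A g

/-- `A` is a substructure of `B` (both structures on the same ambient carrier):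
the universe is a subset and each relation is contained in the corresponding one. -/
def Substruct {σ : Type} {ar : σ → ℕ} {V : Type} (A B : Strc σ ar V) : Prop :=
  A.univ ⊆ B.univ ∧ ∀ R, A.rel R ⊆ B.rel R

/-- `A` is a proper substructure of `B`. -/
def ProperSubstruct {σ : Type} {ar : σ → ℕ} {V : Type} (A B : Strc σ ar V) : Prop :=
  Substruct A B ∧ A ≠ B

/-- `A` is a core: there is no homomorphism from `A` to a proper substructure of `A`. -/
def IsCore {σ : Type} {ar : σ → ℕ} {V : Type} (A : Strc σ ar V) : Prop :=
  ∀ A' : Strc σ ar V, ProperSubstruct A' A → ¬ ∃ f, IsHom A A' f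

/-- `A'` is a core of `A`: a substructure of `A` which is a core and to which
`A` has a homomorphism. -/
def IsCoreOf {σ : Type} {ar : σ → ℕ} {V : Type} (A' A : Strc σ ar V) : Prop :=
  Substruct A' A ∧ (∃ f, IsHom A A' f) ∧ IsCore A'

/-- `A` and `B` are isomorphic: there is a homomorphism `f` from `A` to `B`
which is a bijection between the universes and whose inverse is a homomorphism. -/
def Isomorphic {σ : Type} {ar : σ → ℕ} {V W : Type}
    (A : Strc σ ar V) (B : Strc σ ar W) : Prop :=
  ∃ f g, IsHom A B f ∧ IsHom B A g ∧ Set.BijOn f A.univ B.univ ∧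
    Set.InvOn g f A.univ B.univ

/-- The induced substructure `A[X]` (kept on the same ambient carrier):
its universe is `X` and its relations consist of those tuples of `A` all of
whose entries lie in `X`. -/
def Strc.induce {σ : Type} {ar : σ → ℕ} {V : Type} (A : Strc σ ar V) (X : Set V) :
    Strc σ ar V where
  univ := X
  rel := fun R => {t | t ∈ A.rel R ∧ ∀ i, t i ∈ X}
  mem_univ := fun _ _ ht i => ht.2 i

/-- A retraction of `A`: an endomorphism of `A` which is the identity on its
image. -/
def IsRetraction {σ : Type} {ar : σ → ℕ} {V : Type} (A : Strc σ ar V) (f : V → V) : Prop :=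
  IsHom A A f ∧ ∀ a ∈ A.univ, f (f a) = f a

/-- A `k`-retraction of `A`: a retraction moving at most `k` elements. -/
def IsKRetraction {σ : Type} {ar : σ → ℕ} {V : Type} (A : Strc σ ar V) (k : ℕ)
    (f : V → V) : Prop :=
  IsRetraction A f ∧ {a ∈ A.univ | f a ≠ a}.ncard ≤ k

/-- `A` is a `k`-core: its only `k`-retraction is the identity. -/
def IsKCoreStruct {σ : Type} {ar : σ → ℕ} {V : Type} (A : Strc σ ar V) (k : ℕ) : Prop :=
  ∀ f, IsKRetraction A k f → Set.EqOn f id A.univ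

/-- `A'` is a `k`-core of `A`: a `k`-core obtained from `A` by a finite
sequence of `k`-retractions, each applied to the induced substructure on the
image of the previous one. -/
def IsKCoreOf {σ : Type} {ar : σ → ℕ} {V : Type} (A' A : Strc σ ar V) (k : ℕ) : Prop :=
  IsKCoreStruct A' k ∧
    ∃ (m : ℕ) (S : ℕ → Strc σ ar V), S 0 = A ∧ S m = A' ∧
      ∀ i < m, ∃ f, IsKRetraction (S i) k f ∧
        S (i + 1) = (S i).induce (f '' (S i).univ)


/-!
Write `D ⟶ E` when `E` is isomorphic to the image of a `k`-retraction of `D`; a `k`-core of `A`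
is reached from `A` by a chain of such steps. The relation is locally confluent: for
`k`-retractions `f`, `g` of `D`, some power `(f ∘ g)^n` is idempotent (the monoid `V → V` is
finite), restricts to a `k`-retraction of `f(D)` (it moves only points moved by `g`), and its
image is carried by `g` isomorphically onto the image of the `k`-retraction `(g ∘ f)^n` of `g(D)`.
By Church–Rosser two `k`-cores of `A` reduce to a common structure, and a `k`-core, a notion
invariant under isomorphism, reduces only to isomorphic copies of itself.
-/

namespace Strc

variable {σ V : Type} {ar : σ → ℕ}

theorem ext {A B : Strc σ ar V} (hU : A.univ = B.univ) (hR : ∀ R, A.rel R = B.rel R) :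
    A = B := by
  obtain ⟨U, rel, _⟩ := A
  obtain ⟨U', rel', _⟩ := B
  cases hU
  cases funext hR
  rfl

theorem induce_univ (A : Strc σ ar V) : A.induce A.univ = A :=
  Strc.ext rfl fun R => Set.ext fun t => ⟨And.left, fun ht => ⟨ht, A.mem_univ R t ht⟩⟩

theorem induce_induce (A : Strc σ ar V) {X Y : Set V} (hYX : Y ⊆ X) :
    (A.induce X).induce Y = A.induce Y :=
  Strc.ext rfl fun _ => Set.ext fun _ =>
    ⟨fun ht => ⟨ht.1.1, ht.2⟩, fun ht => ⟨⟨ht.1, fun i => hYX (ht.2 i)⟩, ht.2⟩⟩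

end Strc

namespace IsHom

variable {σ V W X : Type} {ar : σ → ℕ} {A : Strc σ ar V} {B : Strc σ ar W}

theorem id (A : Strc σ ar V) : IsHom A A _root_.id :=
  ⟨Set.mapsTo_id _, fun _ _ ht => ht⟩

theorem comp {C : Strc σ ar X} {f : V → W} {g : W → X} (hf : IsHom A B f) (hg : IsHom B C g) :
    IsHom A C (g ∘ f) :=
  ⟨hg.1.comp hf.1, fun R t ht => hg.2 R _ (hf.2 R t ht)⟩

theorem iterate {f : V → V} (hf : IsHom A A f) (n : ℕ) : IsHom A A f^[n] := by
  induction n with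
  | zero => exact IsHom.id A
  | succ n ih => rw [Function.iterate_succ']; exact ih.comp hf

theorem induce {f : V → W} (hf : IsHom A B f) {X : Set V} {Y : Set W} (hXY : Set.MapsTo f X Y) :
    IsHom (A.induce X) (B.induce Y) f :=
  ⟨hXY, fun R t ht => ⟨hf.2 R t ht.1, fun i => hXY (ht.2 i)⟩⟩

end IsHom

namespace Isomorphic

variable {σ V W X : Type} {ar : σ → ℕ} {A : Strc σ ar V} {B : Strc σ ar W}

theorem refl (A : Strc σ ar V) : Isomorphic A A :=
  ⟨id, id, IsHom.id A, IsHom.id A, Set.bijOn_id _, Set.invOn_id _⟩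

theorem symm (h : Isomorphic A B) : Isomorphic B A := by
  obtain ⟨f, g, hf, hg, -, hinv⟩ := h
  exact ⟨g, f, hg, hf, hinv.symm.bijOn hg.1 hf.1, hinv.symm⟩

theorem trans {C : Strc σ ar X} (hAB : Isomorphic A B) (hBC : Isomorphic B C) :
    Isomorphic A C := by
  obtain ⟨f, f', hf, hf', hbij, hinv⟩ := hAB
  obtain ⟨g, g', hg, hg', hbij', hinv'⟩ := hBC
  exact ⟨g ∘ f, f' ∘ g', hf.comp hg, hg'.comp hf', hbij'.comp hbij, hinv.comp hinv' hf.1 hg'.1⟩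

theorem induce_of_invOn {f : V → W} {g : W → V} (hf : IsHom A B f) (hg : IsHom B A g)
    {X : Set V} {Y : Set W} (hXY : Set.MapsTo f X Y) (hYX : Set.MapsTo g Y X)
    (hinv : Set.InvOn g f X Y) : Isomorphic (A.induce X) (B.induce Y) :=
  ⟨f, g, hf.induce hXY, hg.induce hYX, hinv.bijOn hXY hYX, hinv⟩

end Isomorphic

theorem exists_pow_isIdempotentElem {M : Type*} [Monoid M] [Finite M] (x : M) :
    ∃ n ≠ 0, IsIdempotentElem (x ^ n) := by
  obtain ⟨i, j, hne, hij⟩ := Finite.exists_ne_map_eq_of_infinite (x ^ · : ℕ → M)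
  wlog hlt : i < j generalizing i j
  · exact this j i hne.symm hij.symm (by omega)
  obtain ⟨p, rfl⟩ := Nat.exists_eq_add_of_lt hlt
  have shift : ∀ d, x ^ (i + d + (p + 1)) = x ^ (i + d) := fun d => by
    rw [show i + d + (p + 1) = i + p + 1 + d by ring, pow_add, ← hij, ← pow_add]
  have periodic : ∀ c d, x ^ (i + d + c * (p + 1)) = x ^ (i + d) := by
    intro c d
    induction c with
    | zero => simp
    | succ c ih =>
      rw [show i + d + (c + 1) * (p + 1) = i + (d + c * (p + 1)) + (p + 1) by ring, shift,
        ← add_assoc, ih]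
  refine ⟨(i + 1) * (p + 1), by positivity, ?_⟩
  have hle : i ≤ (i + 1) * (p + 1) := le_trans i.le_succ (Nat.le_mul_of_pos_right _ p.succ_pos)
  have h := periodic (i + 1) ((i + 1) * (p + 1) - i)
  rw [Nat.add_sub_cancel' hle] at h
  rw [IsIdempotentElem, ← pow_add, h]

theorem exists_pow_isIdempotentElem_pair {M : Type*} [Monoid M] [Finite M] (x y : M) :
    ∃ n ≠ 0, IsIdempotentElem (x ^ n) ∧ IsIdempotentElem (y ^ n) := by
  obtain ⟨a, ha0, ha⟩ := exists_pow_isIdempotentElem x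
  obtain ⟨b, hb0, hb⟩ := exists_pow_isIdempotentElem y
  refine ⟨a * b, mul_ne_zero ha0 hb0, ?_, ?_⟩
  · rw [pow_mul]; exact ha.pow b
  · rw [mul_comm, pow_mul]; exact hb.pow a

theorem semiconj_iterate_comp {V : Type} (f g : V → V) (n : ℕ) :
    Function.Semiconj f (g ∘ f)^[n] (f ∘ g)^[n] :=
  Function.Semiconj.iterate_right (ga := g ∘ f) (gb := f ∘ g) (fun _ => rfl) n

theorem Set.MapsTo.iterate_comp_image {V : Type} {f g : V → V} {s : Set V}
    (hf : Set.MapsTo f s s) (hg : Set.MapsTo g s s) (n : ℕ) :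
    Set.MapsTo (f ∘ g)^[n] (f '' s) (f '' s) := by
  rintro _ ⟨a, ha, rfl⟩
  exact ⟨(g ∘ f)^[n] a, (hg.comp hf).iterate n ha, semiconj_iterate_comp f g n a⟩

section Retraction

variable {σ V : Type} {ar : σ → ℕ} {k : ℕ} {D D' : Strc σ ar V}

theorem IsKRetraction.conj [Finite V] {θ θ' g : V → V} (hθ : IsHom D D' θ)
    (hθ' : IsHom D' D θ') (hinv : Set.InvOn θ' θ D.univ D'.univ) (hg : IsKRetraction D' k g) :
    IsKRetraction D k (θ' ∘ g ∘ θ) := by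
  obtain ⟨⟨hgD, hidem⟩, hmoved⟩ := hg
  refine ⟨⟨(hθ.comp hgD).comp hθ', fun a ha => ?_⟩, ?_⟩
  · simp only [Function.comp_apply]
    rw [hinv.2 (hgD.1 (hθ.1 ha)), hidem _ (hθ.1 ha)]
  · refine (Set.ncard_le_ncard_of_injOn θ ?_ (hinv.1.injOn.mono fun a ha => ha.1)).trans hmoved
    rintro a ⟨ha, hmove⟩
    refine ⟨hθ.1 ha, fun hfix => hmove ?_⟩
    simp only [Function.comp_apply]
    rw [hfix, hinv.1 ha]

theorem isomorphic_induce_image_conj {θ θ' g : V → V} (hθ : IsHom D D' θ)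
    (hθ' : IsHom D' D θ') (hinv : Set.InvOn θ' θ D.univ D'.univ) (hg : IsHom D' D' g) :
    Isomorphic (D.induce ((θ' ∘ g ∘ θ) '' D.univ)) (D'.induce (g '' D'.univ)) := by
  refine Isomorphic.induce_of_invOn hθ hθ' ?_ ?_ (hinv.mono ?_ hg.1.image_subset)
  · rintro _ ⟨a, ha, rfl⟩
    exact ⟨θ a, hθ.1 ha, (hinv.2 (hg.1 (hθ.1 ha))).symm⟩
  · rintro _ ⟨b, hb, rfl⟩
    refine ⟨θ' b, hθ'.1 hb, ?_⟩
    simp only [Function.comp_apply]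
    rw [hinv.2 hb]
  · exact ((hθ.comp hg).comp hθ').1.image_subset

theorem IsRetraction.isKRetraction_iterate_comp [Finite V] {f g : V → V} (hf : IsRetraction D f)
    (hg : IsKRetraction D k g) {n : ℕ}
    (hidem : ∀ x, (f ∘ g)^[n] ((f ∘ g)^[n] x) = (f ∘ g)^[n] x) :
    IsKRetraction (D.induce (f '' D.univ)) k (f ∘ g)^[n] := by
  have hmaps := hf.1.1.iterate_comp_image hg.1.1.1 n
  refine ⟨⟨((hg.1.1.comp hf.1).iterate n).induce hmaps, fun x _ => hidem x⟩, ?_⟩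
  refine (Set.ncard_le_ncard ?_).trans hg.2
  rintro _ ⟨⟨a, ha, rfl⟩, hmove⟩
  refine ⟨hf.1.1 ha, fun hfix => hmove (Function.iterate_fixed ?_ n)⟩
  change f (g (f a)) = f a
  rw [hfix, hf.2 a ha]

theorem isomorphic_induce_iterate_comp_image {f g : V → V} (hf : IsHom D D f) (hg : IsHom D D g)
    {m : ℕ} (hu : ∀ x, (f ∘ g)^[m + 1] ((f ∘ g)^[m + 1] x) = (f ∘ g)^[m + 1] x)
    (hw : ∀ x, (g ∘ f)^[m + 1] ((g ∘ f)^[m + 1] x) = (g ∘ f)^[m + 1] x) :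
    Isomorphic ((D.induce (f '' D.univ)).induce ((f ∘ g)^[m + 1] '' (f '' D.univ)))
      ((D.induce (g '' D.univ)).induce ((g ∘ f)^[m + 1] '' (g '' D.univ))) := by
  rw [Strc.induce_induce _ (hf.1.iterate_comp_image hg.1 _).image_subset,
    Strc.induce_induce _ (hg.1.iterate_comp_image hf.1 _).image_subset]
  have fixed_of_mem {e : V → V} (he : ∀ x, e (e x) = e x) {s : Set V} : ∀ x ∈ e '' s, e x = x := by
    rintro _ ⟨a, -, rfl⟩
    exact he a
  -- `g` is inverted by `f ∘ (g ∘ f)^[m]`, as `(f ∘ g)^[m + 1]` fixes every point of its image.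
  refine Isomorphic.induce_of_invOn hg (((hf.comp hg).iterate m).comp hf) ?_ ?_ ⟨?_, ?_⟩
  · rintro _ ⟨_, ⟨a, ha, rfl⟩, rfl⟩
    exact ⟨g (f a), ⟨f a, hf.1 ha, rfl⟩, (semiconj_iterate_comp g f (m + 1) (f a)).symm⟩
  · rintro _ ⟨_, ⟨b, hb, rfl⟩, rfl⟩
    refine ⟨f ((g ∘ f)^[m] (g b)), ⟨_, (hf.comp hg).iterate m |>.1 (hg.1 hb), rfl⟩, ?_⟩
    rw [← semiconj_iterate_comp f g, (Function.Commute.iterate_iterate_self _ _ _).eq]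
    rfl
  · intro x hx
    change f ((g ∘ f)^[m] (g x)) = x
    rw [← semiconj_iterate_comp g f]
    change (f ∘ g) ((f ∘ g)^[m] x) = x
    rw [← Function.iterate_succ_apply' (f ∘ g), fixed_of_mem hu x hx]
  · intro y hy
    change (g ∘ f) ((g ∘ f)^[m] y) = y
    rw [← Function.iterate_succ_apply' (g ∘ f), fixed_of_mem hw y hy]

end Retraction

section KRetractStep

variable {σ V : Type} {ar : σ → ℕ} {k : ℕ} {D D' E : Strc σ ar V}

/-- Taken up to isomorphism, since the two sides of a completed diamond are only isomorphic. -/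
def KRetractStep (k : ℕ) (D E : Strc σ ar V) : Prop :=
  ∃ f, IsKRetraction D k f ∧ Isomorphic (D.induce (f '' D.univ)) E

theorem KRetractStep.of_isomorphic [Finite V] (hDD' : Isomorphic D D') (h : KRetractStep k D E) :
    KRetractStep k D' E := by
  obtain ⟨φ, ψ, hφ, hψ, -, hinv⟩ := hDD'
  obtain ⟨f, hf, hE⟩ := h
  exact ⟨φ ∘ f ∘ ψ, hf.conj hψ hφ hinv.symm,
    (isomorphic_induce_image_conj hψ hφ hinv.symm hf.1.1).trans hE⟩

theorem exists_kRetractStep_induce_image [Finite V] {f g : V → V} (hf : IsKRetraction D k f)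
    (hg : IsKRetraction D k g) :
    ∃ E, KRetractStep k (D.induce (f '' D.univ)) E ∧ KRetractStep k (D.induce (g '' D.univ)) E := by
  have : Finite (Function.End V) := inferInstanceAs (Finite (V → V))
  obtain ⟨n, hn, hu, hw⟩ := exists_pow_isIdempotentElem_pair (M := Function.End V) (f ∘ g) (g ∘ f)
  obtain ⟨m, rfl⟩ := Nat.exists_eq_succ_of_ne_zero hn
  have hu' : ∀ x, (f ∘ g)^[m + 1] ((f ∘ g)^[m + 1] x) = (f ∘ g)^[m + 1] x := congrFun hu
  have hw' : ∀ x, (g ∘ f)^[m + 1] ((g ∘ f)^[m + 1] x) = (g ∘ f)^[m + 1] x := congrFun hw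
  exact ⟨_, ⟨_, IsRetraction.isKRetraction_iterate_comp hf.1 hg hu', .refl _⟩,
    ⟨_, IsRetraction.isKRetraction_iterate_comp hg.1 hf hw',
      (isomorphic_induce_iterate_comp_image hf.1.1 hg.1.1 hu' hw').symm⟩⟩

theorem KRetractStep.diamond [Finite V] {B C : Strc σ ar V} (hB : KRetractStep k D B)
    (hC : KRetractStep k D C) : ∃ E, KRetractStep k B E ∧ KRetractStep k C E := by
  obtain ⟨f, hf, hfB⟩ := hB
  obtain ⟨g, hg, hgC⟩ := hC
  obtain ⟨E, hfE, hgE⟩ := exists_kRetractStep_induce_image hf hg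
  exact ⟨E, hfE.of_isomorphic hfB, hgE.of_isomorphic hgC⟩

theorem IsKCoreOf.reflTransGen_kRetractStep (h : IsKCoreOf E D k) :
    Relation.ReflTransGen (KRetractStep k) D E := by
  obtain ⟨-, m, S, rfl, rfl, hS⟩ := h
  suffices ∀ i ≤ m, Relation.ReflTransGen (KRetractStep k) (S 0) (S i) from this m le_rfl
  intro i hi
  induction i with
  | zero => exact .refl
  | succ i ih =>
    obtain ⟨f, hf, hSi⟩ := hS i hi
    exact (ih (by omega)).tail ⟨f, hf, hSi ▸ .refl _⟩

theorem IsKCoreStruct.of_isomorphic [Finite V] (hD : IsKCoreStruct D k) (hDD' : Isomorphic D D') :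
    IsKCoreStruct D' k := by
  obtain ⟨φ, ψ, hφ, hψ, -, hinv⟩ := hDD'
  intro g hg y hy
  have hfix : ψ (g (φ (ψ y))) = ψ y := hD _ (hg.conj hφ hψ hinv) (hψ.1 hy)
  calc g y = φ (ψ (g (φ (ψ y)))) := by rw [hinv.2 hy, hinv.2 (hg.1.1.1 hy)]
    _ = y := by rw [hfix, hinv.2 hy]

theorem IsKCoreStruct.isomorphic_of_kRetractStep (hD : IsKCoreStruct D k)
    (h : KRetractStep k D E) : Isomorphic D E := by
  obtain ⟨f, hf, hE⟩ := h
  rwa [(hD f hf).image_eq_self, Strc.induce_univ] at hE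

theorem IsKCoreStruct.isomorphic_of_reflTransGen [Finite V] (hD : IsKCoreStruct D k)
    (h : Relation.ReflTransGen (KRetractStep k) D E) : Isomorphic D E := by
  induction h with
  | refl => exact .refl D
  | tail _ hstep ih => exact ih.trans ((hD.of_isomorphic ih).isomorphic_of_kRetractStep hstep)

end KRetractStep

theorem kCores_isomorphic_general {σ V : Type} [Finite V] {ar : σ → ℕ}
    (k : ℕ) (𝔸 𝔸' 𝔸'' : Strc σ ar V)
    (h' : IsKCoreOf 𝔸' 𝔸 k) (h'' : IsKCoreOf 𝔸'' 𝔸 k) :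
    Isomorphic 𝔸' 𝔸'' := by
  obtain ⟨𝔹, h𝔹', h𝔹''⟩ := Relation.church_rosser (r := KRetractStep k)
    (fun _ _ _ hB hC => (hB.diamond hC).imp fun _ hE => ⟨.single hE.1, .single hE.2⟩)
    h'.reflTransGen_kRetractStep h''.reflTransGen_kRetractStep
  exact (h'.1.isomorphic_of_reflTransGen h𝔹').trans (h''.1.isomorphic_of_reflTransGen h𝔹'').symm

/-- for every positive integer `k`, all `k`-cores of a (finite)
relational structure are isomorphic. -/
theorem kCores_isomorphic {σ V : Type} [Finite σ] [Finite V] {ar : σ → ℕ}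
    (k : ℕ) (hk : 0 < k) (𝔸 𝔸' 𝔸'' : Strc σ ar V)
    (h' : IsKCoreOf 𝔸' 𝔸 k) (h'' : IsKCoreOf 𝔸'' 𝔸 k) :
    Isomorphic 𝔸' 𝔸'' :=
  kCores_isomorphic_general k 𝔸 𝔸' 𝔸'' h' h''
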